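/- In every model of Md + CC + SSAV (a complex meadow), with the derived operations re(x) = (1/2)·(x + conj(x)) and im(x) = −(i/2)·(x − conj(x)), the following identities hold for all x: (RI0) x = re(x) + im(x)·i; (RI1) re(x) = conj(re(x)); (RI2) im(x) = conj(im(x)); (RI13) re(x⁻¹) = re(x)·(re(x)·re(x) + im(x)·im(x))⁻¹; (RI21) im(x⁻¹) = −im(x)·(re(x)·re(x) + im(x)·im(x))⁻¹. -/

import Mathlib

/-- A meadow: a commutative ring with a total inverse operation satisfying
`(x⁻¹)⁻¹ = x` and the restricted inverse law `x * (x * x⁻¹) = x`. -/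
class Meadow (M : Type) extends CommRing M, Inv M where
  minv_inv : ∀ x : M, x⁻¹⁻¹ = x
  ril : ∀ x : M, x * (x * x⁻¹) = x

/-- The Inverse Law `IL`: a cancellation meadow is a meadow satisfying it. -/
def InverseLaw (M : Type) [Meadow M] : Prop :=
  ∀ x : M, x ≠ 0 → x * x⁻¹ = 1

/-- A complex meadow (model of `Md + CC + SSAV`): a meadow with an imaginary unit
`i` and a conjugation `conj` satisfying the axioms `CC` and the scheme `SSAV`,
where `1_x = x·x⁻¹`. -/
structure IsComplexMeadow (M : Type) [Meadow M] (i : M) (conj : M → M) : Prop where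
  cc0 : conj 0 = 0
  cc1 : conj 1 = 1
  cc2 : conj i = -i
  cc3 : ∀ x : M, conj (-x) = -conj x
  cc4 : ∀ x y : M, conj (x + y) = conj x + conj y
  cc5 : ∀ x y : M, conj (x * y) = conj x * conj y
  cc6 : ∀ x : M, conj x⁻¹ = (conj x)⁻¹
  cc7 : ∀ x : M, conj (conj x) = x
  cc8 : i * i = -1
  cc9 : ∀ x : M, conj x * (conj x)⁻¹ = x * x⁻¹
  ssav : ∀ (n : ℕ) (x : Fin (n + 1) → M),
    (1 + ∑ j, x j * conj (x j)) * (1 + ∑ j, x j * conj (x j))⁻¹ = 1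

/-- The real part `re(x) = (1/2)·(x + conj x)` in a complex meadow. -/
def cmRe {M : Type} [Meadow M] (conj : M → M) (x : M) : M :=
  (1 * (2 : M)⁻¹) * (x + conj x)

/-- The imaginary part `im(x) = −(i/2)·(x − conj x)` in a complex meadow. -/
def cmIm {M : Type} [Meadow M] (i : M) (conj : M → M) (x : M) : M :=
  -(i * (2 : M)⁻¹) * (x - conj x)

/-!
The inverse in a meadow is multiplicative, since `x⁻¹` is the unique pseudo-inverse of `x`
(`x z x = x`, `z x z = z`) and `x⁻¹ y⁻¹` is one of `x y`. As `1_{conj x} = 1_x`, this gives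
`x⁻¹ = conj x · (x · conj x)⁻¹`, and `x · conj x = re(x)² + im(x)²` is fixed by `conj`; so the
real and imaginary parts of `x⁻¹` are those of `conj x`, scaled by `(re(x)² + im(x)²)⁻¹`.
-/

namespace Meadow

variable {M : Type} [Meadow M]

theorem inv_mul_self_mul_inv (x : M) : x⁻¹ * x * x⁻¹ = x⁻¹ := by
  have h := ril x⁻¹
  rw [minv_inv] at h
  linear_combination h

theorem eq_of_isPseudoInverse {a z w : M} (hz₁ : a * z * a = a) (hz₂ : z * a * z = z)
    (hw₁ : a * w * a = a) (hw₂ : w * a * w = w) : z = w := by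
  have hzw : a * z = a * w := by linear_combination w * hz₁ - z * hw₁
  linear_combination (z + w) * hzw - hz₂ + hw₂

theorem mul_inv (x y : M) : (x * y)⁻¹ = x⁻¹ * y⁻¹ := by
  apply eq_of_isPseudoInverse (a := x * y)
  · linear_combination ril (x * y)
  · linear_combination inv_mul_self_mul_inv (x * y)
  · linear_combination (x * x * x⁻¹) * ril y + y * ril x
  · linear_combination (x⁻¹ * x * x⁻¹) * inv_mul_self_mul_inv y + y⁻¹ * inv_mul_self_mul_inv x

theorem inv_eq_mul_inv_mul_of_mul_inv_eq {x y : M} (h : y * y⁻¹ = x * x⁻¹) :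
    x⁻¹ = y * (x * y)⁻¹ := by
  rw [mul_inv]
  linear_combination (-x⁻¹) * h - inv_mul_self_mul_inv x

end Meadow

namespace IsComplexMeadow

variable {M : Type} [Meadow M] {i : M} {conj : M → M}

theorem two_mul_inv_two (h : IsComplexMeadow M i conj) : (2 : M) * (2 : M)⁻¹ = 1 := by
  simpa [h.cc1, one_add_one_eq_two] using h.ssav 0 fun _ => 1

theorem conj_inv_two (h : IsComplexMeadow M i conj) : conj (2 : M)⁻¹ = (2 : M)⁻¹ := by
  rw [h.cc6, ← one_add_one_eq_two, h.cc4, h.cc1]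

theorem conj_cmRe (h : IsComplexMeadow M i conj) (x : M) :
    conj (cmRe conj x) = cmRe conj x := by
  simp only [cmRe, h.cc5, h.cc4, h.cc1, h.cc7, h.conj_inv_two]
  ring

theorem conj_cmIm (h : IsComplexMeadow M i conj) (x : M) :
    conj (cmIm i conj x) = cmIm i conj x := by
  simp only [cmIm, sub_eq_add_neg, h.cc5, h.cc3, h.cc4, h.cc2, h.cc7, h.conj_inv_two]
  ring

theorem cmRe_add_cmIm_mul_i (h : IsComplexMeadow M i conj) (x : M) :
    cmRe conj x + cmIm i conj x * i = x := by
  unfold cmRe cmIm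
  linear_combination (-(2 : M)⁻¹ * (x - conj x)) * h.cc8 + x * h.two_mul_inv_two

theorem conj_eq_cmRe_sub_cmIm_mul_i (h : IsComplexMeadow M i conj) (x : M) :
    conj x = cmRe conj x - cmIm i conj x * i := by
  conv_lhs => rw [← h.cmRe_add_cmIm_mul_i x]
  rw [h.cc4, h.cc5, h.conj_cmRe, h.conj_cmIm, h.cc2]
  ring

theorem mul_conj_self (h : IsComplexMeadow M i conj) (x : M) :
    x * conj x = cmRe conj x * cmRe conj x + cmIm i conj x * cmIm i conj x := by
  linear_combination x * h.conj_eq_cmRe_sub_cmIm_mul_i x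
    - (cmRe conj x - cmIm i conj x * i) * h.cmRe_add_cmIm_mul_i x
    - (cmIm i conj x * cmIm i conj x) * h.cc8

theorem conj_inv_mul_conj_self (h : IsComplexMeadow M i conj) (x : M) :
    conj (x * conj x)⁻¹ = (x * conj x)⁻¹ := by
  rw [h.cc6, h.cc5, h.cc7, mul_comm]

theorem inv_eq_conj_mul_inv (h : IsComplexMeadow M i conj) (x : M) :
    x⁻¹ = conj x * (x * conj x)⁻¹ :=
  Meadow.inv_eq_mul_inv_mul_of_mul_inv_eq (h.cc9 x)

theorem cmRe_conj (h : IsComplexMeadow M i conj) (x : M) :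
    cmRe conj (conj x) = cmRe conj x := by
  rw [cmRe, cmRe, h.cc7, add_comm]

theorem cmIm_conj (h : IsComplexMeadow M i conj) (x : M) :
    cmIm i conj (conj x) = -cmIm i conj x := by
  rw [cmIm, cmIm, h.cc7]
  ring

theorem cmRe_mul_of_conj_eq (h : IsComplexMeadow M i conj) {r : M} (hr : conj r = r) (y : M) :
    cmRe conj (y * r) = cmRe conj y * r := by
  rw [cmRe, cmRe, h.cc5, hr]
  ring

theorem cmIm_mul_of_conj_eq (h : IsComplexMeadow M i conj) {r : M} (hr : conj r = r) (y : M) :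
    cmIm i conj (y * r) = cmIm i conj y * r := by
  rw [cmIm, cmIm, h.cc5, hr]
  ring

end IsComplexMeadow

/-- in every complex meadow the identities RI0, RI1, RI2, RI13 and
RI21 hold. -/
theorem complexMeadow_re_im_identities (M : Type) [Meadow M] (i : M)
    (conj : M → M) (h : IsComplexMeadow M i conj) (x : M) :
    x = cmRe conj x + cmIm i conj x * i ∧
    cmRe conj x = conj (cmRe conj x) ∧
    cmIm i conj x = conj (cmIm i conj x) ∧
    cmRe conj x⁻¹ =
      cmRe conj x * (cmRe conj x * cmRe conj x + cmIm i conj x * cmIm i conj x)⁻¹ ∧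
    cmIm i conj x⁻¹ =
      -cmIm i conj x * (cmRe conj x * cmRe conj x + cmIm i conj x * cmIm i conj x)⁻¹ := by
  have hN := h.conj_inv_mul_conj_self x
  refine ⟨(h.cmRe_add_cmIm_mul_i x).symm, (h.conj_cmRe x).symm, (h.conj_cmIm x).symm, ?_, ?_⟩
  · rw [h.inv_eq_conj_mul_inv x, h.cmRe_mul_of_conj_eq hN, h.cmRe_conj, h.mul_conj_self]
  · rw [h.inv_eq_conj_mul_inv x, h.cmIm_mul_of_conj_eq hN, h.cmIm_conj, h.mul_conj_self]
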